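/- In a commutative group G, for any r ≥ 1 and any a₁,…,a_{2^r} ∈ G, the fully balanced bracketing (…(e_{a₁}e_{a₂})…(e_{a_{2^r−1}}e_{a_{2^r}})…) in A_G(f,t) equals the product ∏_{k=0}^{r−1} ∏_{s=0}^{2^{r−k−1}−1} f( t^{2^k−1} ∘ ∏_{q=1}^{2^k} a_{2^{k+1}s+q}, t^{2^k−1} ∘ ∏_{l=1}^{2^k} a_{2^{k+1}s+2^k+l} ) times the basis element e_{t^{2^r−1} ∘ ∏_{i=1}^{2^r} a_i}. -/

import Mathlib

/-!
A product of two scalar multiples of basis elements is again one, so by induction on `r` the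
balanced bracketing is `c_r(a) • e_{g_r(a)}`. Splitting `a` into its halves `a` and
`a' = a(2^r + ·)`, the index obeys `g_{r+1}(a) = g_r(a) g_r(a') t`, and the scalar picks up the new
top-level factor `f (g_r a) (g_r a')`, while at each lower level `k` the `2^(r-k)` block pairs of
the whole sequence are those of the first half followed by those of the second.
-/

open Finsupp

/-- Multiplication of the algebra `A_G(f,t)`: `e_a e_b = f(a,b) e_{a∘b∘t}`. -/
noncomputable def mulG {K G : Type*} [Field K] [CommGroup G] (f : G → G → K) (t : G)
    (x y : G →₀ K) : G →₀ K :=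
  x.sum fun a xa => y.sum fun b yb => Finsupp.single (a * b * t) (xa * yb * f a b)

/-- The fully balanced bracketing of the `2^r` basis elements `e_{a 1}, …, e_{a (2^r)}`:
`bal f t a 0 = e_{a 1}` and
`bal f t a (r+1) = (bal of the first 2^r elements) * (bal of the last 2^r elements)`. -/
noncomputable def bal {K G : Type*} [Field K] [CommGroup G] (f : G → G → K) (t : G)
    (a : ℕ → G) : ℕ → (G →₀ K)
  | 0 => Finsupp.single (a 1) 1
  | r + 1 => mulG f t (bal f t a r) (bal f t (fun i => a (2 ^ r + i)) r)

open Finset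

theorem Finset.prod_Icc_one_add {M : Type*} [CommMonoid M] (b : ℕ → M) (m n : ℕ) :
    ∏ i ∈ Icc 1 (m + n), b i = (∏ i ∈ Icc 1 m, b i) * ∏ i ∈ Icc 1 n, b (m + i) := by
  induction n with
  | zero => simp
  | succ n ih =>
    rw [← add_assoc, prod_Icc_succ_top (by omega), ih, prod_Icc_succ_top (by omega), mul_assoc,
      add_assoc]

theorem two_pow_mul_two_pow_sub {k r : ℕ} (hk : k < r) :
    2 ^ (k + 1) * 2 ^ (r - k - 1) = 2 ^ r := by
  rw [← pow_add]; congr 1; omega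

theorem prod_range_two_pow_succ_sub_eq {M : Type*} [CommMonoid M] (g : ℕ → M) {k r : ℕ}
    (hk : k < r) :
    ∏ s ∈ range (2 ^ (r + 1 - k - 1)), g (2 ^ (k + 1) * s) =
      (∏ s ∈ range (2 ^ (r - k - 1)), g (2 ^ (k + 1) * s)) *
        ∏ s ∈ range (2 ^ (r - k - 1)), g (2 ^ r + 2 ^ (k + 1) * s) := by
  rw [show r + 1 - k - 1 = r - k - 1 + 1 by omega, pow_succ, mul_two, prod_range_add]
  simp only [mul_add, two_pow_mul_two_pow_sub hk]

section BalancedBracketing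

variable {K G : Type*} [Field K] [CommGroup G] (f : G → G → K) (t : G)

theorem mulG_single (g h : G) (c d : K) :
    mulG f t (single g c) (single h d) = single (g * h * t) (c * d * f g h) := by
  simp [mulG]

/-- The index of the basis element that a balanced bracketing of `e_{a 1}, …, e_{a (2^k)}` is a
multiple of. -/
def balIndex (a : ℕ → G) (k : ℕ) : G := t ^ (2 ^ k - 1) * ∏ i ∈ Icc 1 (2 ^ k), a i

theorem balIndex_succ (a : ℕ → G) (k : ℕ) :
    balIndex t a (k + 1) = balIndex t a k * balIndex t (fun i => a (2 ^ k + i)) k * t := by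
  have hk : 1 ≤ 2 ^ k := Nat.one_le_two_pow
  rw [balIndex, balIndex, balIndex, pow_succ, mul_two, prod_Icc_one_add,
    show 2 ^ k + 2 ^ k - 1 = 2 ^ k - 1 + (2 ^ k - 1) + 1 by omega, pow_succ, pow_add]
  ac_rfl

def balCoeff (a : ℕ → G) (r : ℕ) : K :=
  ∏ k ∈ range r, ∏ s ∈ range (2 ^ (r - k - 1)),
    f (balIndex t (fun i => a (2 ^ (k + 1) * s + i)) k)
      (balIndex t (fun i => a (2 ^ (k + 1) * s + 2 ^ k + i)) k)

theorem balCoeff_succ (a : ℕ → G) (r : ℕ) :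
    balCoeff f t a (r + 1) =
      balCoeff f t a r * balCoeff f t (fun i => a (2 ^ r + i)) r *
        f (balIndex t a r) (balIndex t (fun i => a (2 ^ r + i)) r) := by
  simp only [balCoeff]
  rw [prod_range_succ, ← prod_mul_distrib]
  congr 1
  · refine prod_congr rfl fun k hk => ?_
    rw [prod_range_two_pow_succ_sub_eq (fun n => f (balIndex t (fun i => a (n + i)) k)
      (balIndex t (fun i => a (n + 2 ^ k + i)) k)) (mem_range.mp hk)]
    simp only [add_assoc]
  · simp

theorem bal_eq_balCoeff_smul_single (a : ℕ → G) (r : ℕ) :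
    bal f t a r = balCoeff f t a r • single (balIndex t a r) 1 := by
  induction r generalizing a with
  | zero => simp [bal, balCoeff, balIndex]
  | succ r ih =>
    rw [bal, ih, ih, smul_single_one, smul_single_one, mulG_single, balCoeff_succ, balIndex_succ,
      smul_single_one]

end BalancedBracketing

theorem stmt3_general {K G : Type*} [Field K] [CommGroup G] (f : G → G → K) (t : G)
    (r : ℕ) (a : ℕ → G) :
    bal f t a r =
      (∏ k ∈ Finset.range r, ∏ s ∈ Finset.range (2 ^ (r - k - 1)),
          f (t ^ (2 ^ k - 1) * ∏ q ∈ Finset.Icc 1 (2 ^ k), a (2 ^ (k + 1) * s + q))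
            (t ^ (2 ^ k - 1) *
              ∏ l ∈ Finset.Icc 1 (2 ^ k), a (2 ^ (k + 1) * s + 2 ^ k + l))) •
        Finsupp.single (t ^ (2 ^ r - 1) * ∏ i ∈ Finset.Icc 1 (2 ^ r), a i) (1 : K) :=
  bal_eq_balCoeff_smul_single f t a r

/-- the balanced bracketing formula (F2). -/
theorem stmt3 {K G : Type*} [Field K] [CommGroup G] (f : G → G → K) (t : G)
    (r : ℕ) (hr : 1 ≤ r) (a : ℕ → G) :
    bal f t a r =
      (∏ k ∈ Finset.range r, ∏ s ∈ Finset.range (2 ^ (r - k - 1)),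
          f (t ^ (2 ^ k - 1) * ∏ q ∈ Finset.Icc 1 (2 ^ k), a (2 ^ (k + 1) * s + q))
            (t ^ (2 ^ k - 1) *
              ∏ l ∈ Finset.Icc 1 (2 ^ k), a (2 ^ (k + 1) * s + 2 ^ k + l))) •
        Finsupp.single (t ^ (2 ^ r - 1) * ∏ i ∈ Finset.Icc 1 (2 ^ r), a i) (1 : K) :=
  stmt3_general f t r a
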